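/- Let m ≥ 1 and let u : ℝ³ → ℝ^m be a C¹ map satisfying the inner variation identity on B₆₄(0). Then for every x ∈ ℝ³ and r > 0 with the closed ball B̄_r(x) contained in B₆₄(0), the function r ↦ H_φ(x,r) is differentiable at r and ∂_r H_φ(x,r) = (2/r) H_φ(x,r) + 2 D_φ(x,r). -/

import Mathlib

/-!
By scaling, `H_φ(x,s) = s² ∫ |u(x + s z)|² K(z) dz` with the fixed kernel `K(z) = |z|⁻¹ ψ(|z|)`,
so differentiating under the integral sign gives
`∂ₛ H_φ(x,s) = (2/s) H_φ(x,s) + s² ∫ ∂ₛ|u(x + s z)|² K(z) dz`. Scaling back, the last integral is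
`s⁻³ ∫ ⟨∇|u|²(y), y - x⟩ |y - x|⁻¹ ψ(|y - x|/s) dy`. Since
`∇_y φ(|y - x|/s) = -s⁻¹ ψ(|y - x|/s) (y - x)/|y - x|` almost everywhere, the inner variation
identity tested with `φ(|· - x|/s)` identifies this integral with `2 s D_φ(x,s)`.
-/

open MeasureTheory Metric

noncomputable section

/-- `ℝ³` as a Euclidean space. -/
abbrev E3 : Type := EuclideanSpace ℝ (Fin 3)

/-- The cutoff function `φ`: `1` on `[0,1/2]`, `2 - 2t` on `[1/2,1]`, `0` on `[1,∞)`. -/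
def phi (t : ℝ) : ℝ := if t ≤ 1/2 then 1 else if t ≤ 1 then 2 - 2*t else 0

/-- The weight `ψ = -φ'` (a.e.): `2` on `(1/2,1)` and `0` otherwise. -/
def psi (t : ℝ) : ℝ := if 1/2 < t ∧ t < 1 then 2 else 0

/-- The standard orthonormal basis of `ℝ³`. -/
def e3 (i : Fin 3) : E3 := EuclideanSpace.basisFun (Fin 3) ℝ i

/-- The radial unit vector field `ν_x(y) = (y - x)/|y - x|`. -/
def nu (x y : E3) : E3 := ‖y - x‖⁻¹ • (y - x)

/-- Squared Frobenius norm of the differential `|∇u(y)|²`. -/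
def gradSq {m : ℕ} (u : E3 → EuclideanSpace ℝ (Fin m)) (y : E3) : ℝ :=
  ∑ i : Fin 3, ‖fderiv ℝ u y (e3 i)‖ ^ 2

/-- Smoothed Dirichlet energy `D_φ(x,r)`. -/
def Dphi {m : ℕ} (u : E3 → EuclideanSpace ℝ (Fin m)) (x : E3) (r : ℝ) : ℝ :=
  ∫ y : E3, gradSq u y * phi (‖x - y‖ / r)

/-- Smoothed height `H_φ(x,r)`. -/
def Hphi {m : ℕ} (u : E3 → EuclideanSpace ℝ (Fin m)) (x : E3) (r : ℝ) : ℝ :=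
  ∫ y : E3, ‖u y‖ ^ 2 * ‖y - x‖⁻¹ * psi (‖x - y‖ / r)

/-- Smoothed remainder `E_φ(x,r)`. -/
def Ephi {m : ℕ} (u : E3 → EuclideanSpace ℝ (Fin m)) (x : E3) (r : ℝ) : ℝ :=
  ∫ y : E3, ‖fderiv ℝ u y (nu x y)‖ ^ 2 * ‖y - x‖ * psi (‖x - y‖ / r)

/-- Smoothed frequency `N_φ(x,r) = r D_φ(x,r)/H_φ(x,r)`. -/
def Nphi {m : ℕ} (u : E3 → EuclideanSpace ℝ (Fin m)) (x : E3) (r : ℝ) : ℝ :=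
  r * Dphi u x r / Hphi u x r

/-- Frequency pinching `W_s^r(x) = N_φ(x,r) - N_φ(x,s)`. -/
def Wpinch {m : ℕ} (u : E3 → EuclideanSpace ℝ (Fin m)) (x : E3) (s r : ℝ) : ℝ :=
  Nphi u x r - Nphi u x s

/-- Classical height: integral of `|u|²` over the sphere `∂B_s(x)` with respect to the
two-dimensional Hausdorff (surface) measure. -/
def sphHeight {m : ℕ} (u : E3 → EuclideanSpace ℝ (Fin m)) (x : E3) (s : ℝ) : ℝ :=
  ∫ y in sphere x s, ‖u y‖ ^ 2 ∂(μH[2])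

/-- `u` satisfies the inner (target) variation identity on `Ω`. -/
def InnerVariation {m : ℕ} (u : E3 → EuclideanSpace ℝ (Fin m)) (Ω : Set E3) : Prop :=
  ∀ f : E3 → ℝ, (∃ K, LipschitzWith K f) → HasCompactSupport f → tsupport f ⊆ Ω →
    (∫ y : E3, ((inner ℝ (gradient (fun z => ‖u z‖ ^ 2 / 2) y) (gradient f y) : ℝ)
      + gradSq u y * f y)) = 0

/-- `u` satisfies the domain variation identity on `Ω`. -/
def DomainVariation {m : ℕ} (u : E3 → EuclideanSpace ℝ (Fin m)) (Ω : Set E3) : Prop :=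
  ∀ X : E3 → E3, (∃ K, LipschitzWith K X) → HasCompactSupport X → tsupport X ⊆ Ω →
    (∫ y : E3, (2 * ∑ i : Fin 3, ∑ j : Fin 3,
        (inner ℝ (fderiv ℝ u y (e3 i)) (fderiv ℝ u y (e3 j)) : ℝ)
          * (inner ℝ (fderiv ℝ X y (e3 i)) (e3 j) : ℝ)
      - gradSq u y * ∑ j : Fin 3, (inner ℝ (fderiv ℝ X y (e3 j)) (e3 j) : ℝ))) = 0

/-- The affine line through `a` in direction `v`. -/
def lineThrough (a v : E3) : Set E3 := {y | ∃ t : ℝ, y = a + t • v}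

/-- Jones-type `β₂` number `D_μ(x,r)`: infimum over affine lines `L` of
`r⁻³ ∫_{B_r(x)} dist(y,L)² dμ(y)`. -/
def JonesD (μ : Measure E3) (x : E3) (r : ℝ) : ℝ :=
  ⨅ p : E3 × {v : E3 // v ≠ 0},
    (∫ y in ball x r, Metric.infDist y (lineThrough p.1 p.2.1) ^ 2 ∂μ) / r ^ 3

lemma phi_eq_max_min (t : ℝ) : phi t = max 0 (min 1 (2 - 2 * t)) := by
  unfold phi
  split_ifs with h1 h2
  · rw [min_eq_left (by linarith), max_eq_right zero_le_one]
  · rw [min_eq_right (by linarith), max_eq_right (by linarith)]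
  · rw [min_eq_right (by linarith), max_eq_left (by linarith)]

lemma lipschitzWith_phi : LipschitzWith 2 phi := by
  have affine : LipschitzWith 2 (fun t : ℝ => 2 - 2 * t) :=
    LipschitzWith.of_dist_le_mul fun a b => by
      rw [Real.dist_eq, Real.dist_eq, show 2 - 2 * a - (2 - 2 * b) = -2 * (a - b) by ring,
        abs_mul]
      norm_num
  simpa only [← phi_eq_max_min] using (affine.const_min 1).const_max 0

lemma phi_eq_zero_of_one_lt {t : ℝ} (ht : 1 < t) : phi t = 0 := by
  rw [phi, if_neg (by linarith), if_neg ht.not_ge]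

lemma psi_eq_zero_of_le_half {t : ℝ} (ht : t ≤ 1 / 2) : psi t = 0 :=
  if_neg fun h => h.1.not_ge ht

lemma psi_eq_zero_of_one_le {t : ℝ} (ht : 1 ≤ t) : psi t = 0 :=
  if_neg fun h => h.2.not_ge ht

lemma hasDerivAt_phi {t : ℝ} (h₁ : t ≠ 1 / 2) (h₂ : t ≠ 1) : HasDerivAt phi (-psi t) t := by
  rcases lt_or_gt_of_ne h₁ with ht | ht
  · have hloc : phi =ᶠ[nhds t] fun _ => 1 := by
      filter_upwards [Iio_mem_nhds ht] with s hs
      exact if_pos (Set.mem_Iio.1 hs).le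
    rw [psi_eq_zero_of_le_half ht.le, neg_zero]
    exact (hasDerivAt_const t (1 : ℝ)).congr_of_eventuallyEq hloc
  rcases lt_or_gt_of_ne h₂ with ht' | ht'
  · have hloc : phi =ᶠ[nhds t] fun s => 2 - 2 * s := by
      filter_upwards [Ioo_mem_nhds ht ht'] with s hs
      rw [phi, if_neg hs.1.not_ge, if_pos hs.2.le]
    rw [psi, if_pos ⟨ht, ht'⟩]
    simpa using (((hasDerivAt_id t).const_mul 2).const_sub 2).congr_of_eventuallyEq hloc
  · have hloc : phi =ᶠ[nhds t] fun _ => 0 := by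
      filter_upwards [Ioi_mem_nhds ht'] with s hs
      exact phi_eq_zero_of_one_lt hs
    rw [psi_eq_zero_of_one_le ht'.le, neg_zero]
    exact (hasDerivAt_const t (0 : ℝ)).congr_of_eventuallyEq hloc

@[fun_prop]
lemma measurable_psi : Measurable psi :=
  Measurable.ite measurableSet_Ioo measurable_const measurable_const

lemma abs_inv_mul_psi_le (t : ℝ) : |t⁻¹ * psi t| ≤ 4 := by
  unfold psi
  split_ifs with h
  · have ht : 0 < t := by linarith [h.1]
    rw [abs_of_pos (by positivity), show (4 : ℝ) = (1 / 2)⁻¹ * 2 by norm_num]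
    gcongr
    exact h.1.le
  · simp

lemma MeasureTheory.Integrable.continuous_mul_of_hasCompactSupport {X : Type*}
    [TopologicalSpace X] [T2Space X] [MeasurableSpace X] [OpensMeasurableSpace X] {μ : Measure X}
    {c g : X → ℝ} (hc : Integrable c μ) (hcs : HasCompactSupport c) (hg : Continuous g) :
    Integrable (fun z => g z * c z) μ := by
  refine (integrableOn_iff_integrable_of_support_subset ?_).1
    (IntegrableOn.continuousOn_mul hg.continuousOn hc.integrableOn hcs)
  exact (Function.support_mul_subset_right _ _).trans (subset_tsupport c)

section General

variable {E : Type*} [NormedAddCommGroup E] [NormedSpace ℝ E] [MeasurableSpace E] [BorelSpace E]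

lemma integral_comp_add_smul [FiniteDimensional ℝ E] (μ : Measure E) [μ.IsAddHaarMeasure]
    (f : E → ℝ) (x : E) (s : ℝ) :
    ∫ z, f (x + s • z) ∂μ = |(s ^ Module.finrank ℝ E)⁻¹| * ∫ y, f y ∂μ := by
  rw [Measure.integral_comp_smul μ (fun w => f (x + w)) s, integral_add_left_eq_self, smul_eq_mul]

lemma hasDerivAt_integral_comp_add_smul_mul {μ : Measure E} {q c : E → ℝ} (hq : ContDiff ℝ 1 q)
    (hc : Integrable c μ) (hcs : HasCompactSupport c) (x : E) (r : ℝ) :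
    HasDerivAt (fun s => ∫ z, q (x + s • z) * c z ∂μ)
      (∫ z, fderiv ℝ q (x + r • z) z * c z ∂μ) r := by
  have hq' : Continuous fun p : ℝ × E => fderiv ℝ q (x + p.1 • p.2) p.2 :=
    ((hq.continuous_fderiv one_ne_zero).comp (by fun_prop)).clm_apply continuous_snd
  obtain ⟨M, hM⟩ := ((isCompact_closedBall r 1).prod hcs).exists_bound_of_continuousOn
    hq'.continuousOn
  have hbound : ∀ z, ∀ s ∈ ball r 1, ‖fderiv ℝ q (x + s • z) z * c z‖ ≤ M * ‖c z‖ := by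
    intro z s hs
    by_cases hz : z ∈ tsupport c
    · rw [norm_mul]
      exact mul_le_mul_of_nonneg_right (hM (s, z) ⟨ball_subset_closedBall hs, hz⟩)
        (norm_nonneg _)
    · simp [image_eq_zero_of_notMem_tsupport hz]
  have hderiv : ∀ z, ∀ s ∈ ball r 1,
      HasDerivAt (fun t => q (x + t • z) * c z) (fderiv ℝ q (x + s • z) z * c z) s := by
    intro z s _
    have hline : HasDerivAt (fun t : ℝ => x + t • z) z s := by
      simpa using ((hasDerivAt_id s).smul_const z).const_add x
    exact (((hq.differentiable one_ne_zero) _).hasFDerivAt.comp_hasDerivAt s hline).mul_const _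
  exact (hasDerivAt_integral_of_dominated_loc_of_deriv_le (ball_mem_nhds r one_pos)
    (.of_forall fun s => (hq.continuous.comp (by fun_prop)).aestronglyMeasurable.mul
      hc.aestronglyMeasurable)
    (hc.continuous_mul_of_hasCompactSupport hcs (hq.continuous.comp (by fun_prop)))
    ((hq'.comp (Continuous.prodMk_right r)).aestronglyMeasurable.mul hc.aestronglyMeasurable)
    (.of_forall hbound) (hc.norm.const_mul M) (.of_forall hderiv)).2

end General

def heightKernel {E : Type*} [NormedAddCommGroup E] (x : E) (r : ℝ) (y : E) : ℝ :=
  ‖y - x‖⁻¹ * psi (‖y - x‖ / r)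

section HeightKernel

variable {E : Type*} [NormedAddCommGroup E]

lemma heightKernel_eq_zero {x y : E} {r : ℝ} (hr : 0 < r) (hy : y ∉ closedBall x r) :
    heightKernel x r y = 0 := by
  rw [mem_closedBall, dist_eq_norm, not_le] at hy
  rw [heightKernel, psi_eq_zero_of_one_le ((one_le_div hr).2 hy.le), mul_zero]

lemma abs_heightKernel_le (x y : E) {r : ℝ} (hr : 0 < r) : |heightKernel x r y| ≤ 4 / r := by
  have h : heightKernel x r y = r⁻¹ * ((‖y - x‖ / r)⁻¹ * psi (‖y - x‖ / r)) := by
    rw [heightKernel, inv_div, ← mul_assoc, ← mul_div_assoc, inv_mul_cancel₀ hr.ne', one_div]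
  rw [h, abs_mul, abs_of_pos (inv_pos.2 hr), div_eq_inv_mul 4 r]
  exact mul_le_mul_of_nonneg_left (abs_inv_mul_psi_le _) (inv_nonneg.2 hr.le)

lemma heightKernel_add_smul [NormedSpace ℝ E] (x z : E) {s : ℝ} (hs : 0 < s) :
    heightKernel x s (x + s • z) = s⁻¹ * heightKernel 0 1 z := by
  simp only [heightKernel, add_sub_cancel_left, sub_zero, div_one, norm_smul, Real.norm_eq_abs,
    abs_of_pos hs, mul_inv, mul_div_cancel_left₀ _ hs.ne', mul_assoc]

lemma lipschitzWith_phi_norm_sub_div (x : E) {r : ℝ} (hr : 0 < r) :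
    LipschitzWith (2 * (Real.toNNReal r⁻¹)) fun y => phi (‖y - x‖ / r) := by
  refine lipschitzWith_phi.comp (LipschitzWith.of_dist_le_mul fun y z => ?_)
  rw [Real.coe_toNNReal _ (inv_nonneg.2 hr.le), Real.dist_eq, ← sub_div, abs_div, abs_of_pos hr,
    div_eq_inv_mul]
  gcongr
  simpa [dist_eq_norm] using abs_norm_sub_norm_le (y - x) (z - x)

variable [ProperSpace E]

lemma hasCompactSupport_heightKernel (x : E) {r : ℝ} (hr : 0 < r) :
    HasCompactSupport (heightKernel x r) :=
  .intro (isCompact_closedBall x r) fun _ hy => heightKernel_eq_zero hr hy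

lemma integrable_heightKernel [MeasurableSpace E] [BorelSpace E] {μ : Measure E}
    [IsFiniteMeasureOnCompacts μ] (x : E) {r : ℝ} (hr : 0 < r) :
    Integrable (heightKernel x r) μ := by
  have hmeas : Measurable (heightKernel x r) := by
    unfold heightKernel; fun_prop
  refine (integrableOn_iff_integrable_of_support_subset
    (Function.support_subset_iff'.2 fun _ hy => heightKernel_eq_zero hr hy)).1 ?_
  exact Measure.integrableOn_of_bounded (isCompact_closedBall x r).measure_ne_top
    hmeas.aestronglyMeasurable (M := 4 / r) (.of_forall fun y => abs_heightKernel_le x y hr)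

end HeightKernel

section Cutoff

variable {F : Type*} [NormedAddCommGroup F] [InnerProductSpace ℝ F] [CompleteSpace F]

lemma hasGradientAt_norm_sub {x y : F} (h : y ≠ x) :
    HasGradientAt (fun z => ‖z - x‖) (‖y - x‖⁻¹ • (y - x)) y := by
  have hpos : 0 < ‖y - x‖ := norm_pos_iff.2 (sub_ne_zero.2 h)
  have hsq := ((hasFDerivAt_id y).sub_const x).norm_sq.sqrt (by positivity)
  simp only [Real.sqrt_sq (norm_nonneg _)] at hsq
  rw [hasGradientAt_iff_hasFDerivAt]
  refine hsq.congr_fderiv ?_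
  ext v
  simp
  field_simp

lemma hasGradientAt_phi_norm_sub_div {x y : F} {r : ℝ} (hr : 0 < r) (hyx : y ≠ x)
    (h₁ : ‖y - x‖ ≠ r / 2) (h₂ : ‖y - x‖ ≠ r) :
    HasGradientAt (fun z => phi (‖z - x‖ / r)) (-(r⁻¹ * heightKernel x r y) • (y - x)) y := by
  have hphi := (hasDerivAt_phi (t := ‖y - x‖ / r) (by contrapose! h₁; field_simp at h₁; linarith)
    (by contrapose! h₂; field_simp at h₂; linarith)).comp ‖y - x‖ ((hasDerivAt_id _).div_const r)
  have hnorm := hasGradientAt_iff_hasFDerivAt.1 (hasGradientAt_norm_sub hyx)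
  rw [hasGradientAt_iff_hasFDerivAt]
  refine (hphi.comp_hasFDerivAt y hnorm).congr_fderiv ?_
  ext v
  simp [heightKernel]
  ring

lemma ae_hasGradientAt_phi_norm_sub_div [FiniteDimensional ℝ F] [Nontrivial F] [MeasurableSpace F]
    [BorelSpace F] (μ : Measure F) [μ.IsAddHaarMeasure] (x : F) {r : ℝ} (hr : 0 < r) :
    ∀ᵐ y ∂μ,
      HasGradientAt (fun z => phi (‖z - x‖ / r)) (-(r⁻¹ * heightKernel x r y) • (y - x)) y := by
  have hnull : μ (sphere x 0 ∪ sphere x (r / 2) ∪ sphere x r) = 0 := by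
    simp only [measure_union_null_iff, Measure.addHaar_sphere, and_self]
  filter_upwards [measure_eq_zero_iff_ae_notMem.1 hnull] with y hy
  simp only [Set.mem_union, mem_sphere_iff_norm, not_or, norm_eq_zero, sub_eq_zero] at hy
  exact hasGradientAt_phi_norm_sub_div hr hy.1.1 hy.1.2 hy.2

end Cutoff

section Height

variable {m : ℕ} {u : E3 → EuclideanSpace ℝ (Fin m)}

lemma integral_fderiv_normSq_mul_heightKernel (hu : ContDiff ℝ 1 u)
    (hiv : InnerVariation u (ball (0 : E3) 64)) {x : E3} {r : ℝ} (hr : 0 < r)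
    (hball : closedBall x r ⊆ ball (0 : E3) 64) :
    ∫ y, fderiv ℝ (fun z => ‖u z‖ ^ 2) y (y - x) * heightKernel x r y = 2 * r * Dphi u x r := by
  set f : E3 → ℝ := fun y => phi (‖y - x‖ / r)
  have hN : ContDiff ℝ 1 fun z => ‖u z‖ ^ 2 := hu.norm_sq ℝ
  have hf_zero : ∀ y ∉ closedBall x r, f y = 0 := fun y hy => by
    rw [mem_closedBall, dist_eq_norm, not_le] at hy
    exact phi_eq_zero_of_one_lt ((one_lt_div hr).2 hy)
  have hf_supp : HasCompactSupport f := .intro (isCompact_closedBall x r) hf_zero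
  have hf_tsupp : tsupport f ⊆ ball 0 64 :=
    (closure_minimal (Function.support_subset_iff'.2 hf_zero) isClosed_closedBall).trans hball
  -- `∇f` is radial a.e., so only the radial derivative of `|u|²` survives in `⟨∇(|u|²/2), ∇f⟩`.
  have hae : (fun y => inner ℝ (gradient (fun z => ‖u z‖ ^ 2 / 2) y) (gradient f y)) =ᵐ[volume]
      fun y => -(2 * r)⁻¹ * (fderiv ℝ (fun z => ‖u z‖ ^ 2) y (y - x) * heightKernel x r y) := by
    filter_upwards [ae_hasGradientAt_phi_norm_sub_div volume x hr] with y hy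
    rw [hy.gradient, inner_gradient_left, map_smul, smul_eq_mul]
    simp only [div_eq_mul_inv, fderiv_mul_const ((hN.differentiable one_ne_zero) y),
      FunLike.coe_smul, Pi.smul_apply, smul_eq_mul]
    ring
  have hint : Integrable fun y => fderiv ℝ (fun z => ‖u z‖ ^ 2) y (y - x) * heightKernel x r y :=
    (integrable_heightKernel x hr).continuous_mul_of_hasCompactSupport
      (hasCompactSupport_heightKernel x hr)
      ((hN.continuous_fderiv one_ne_zero).clm_apply (by fun_prop))
  have hgradSq : Continuous (gradSq u) := by
    unfold gradSq; fun_prop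
  have hD : ∫ y, gradSq u y * f y = Dphi u x r := by
    simp only [Dphi, f, norm_sub_rev]
  have hint' : Integrable fun y => gradSq u y * f y :=
    (hgradSq.mul (lipschitzWith_phi_norm_sub_div x hr).continuous).integrable_of_hasCompactSupport
      hf_supp.mul_left
  have := hiv f ⟨_, lipschitzWith_phi_norm_sub_div x hr⟩ hf_supp hf_tsupp
  rw [integral_add ((hint.const_mul _).congr hae.symm) hint', integral_congr_ae hae,
    integral_const_mul, hD] at this
  field_simp at this
  linarith

lemma Hphi_eq_integral_heightKernel (u : E3 → EuclideanSpace ℝ (Fin m)) (x : E3) (r : ℝ) :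
    Hphi u x r = ∫ y, ‖u y‖ ^ 2 * heightKernel x r y := by
  simp only [Hphi, heightKernel, norm_sub_rev x, mul_assoc]

lemma integral_comp_add_smul_mul_heightKernel (Φ : E3 → ℝ) (x : E3) {s : ℝ} (hs : 0 < s) :
    ∫ z, Φ (x + s • z) * heightKernel 0 1 z = (s ^ 2)⁻¹ * ∫ y, Φ y * heightKernel x s y := by
  have h := integral_comp_add_smul volume (fun y => Φ y * heightKernel x s y) x s
  simp only [heightKernel_add_smul x _ hs, finrank_euclideanSpace_fin, mul_left_comm _ s⁻¹,
    integral_const_mul, abs_of_pos (inv_pos.2 (pow_pos hs 3))] at h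
  field_simp at h ⊢
  linear_combination h

end Height

theorem stmt_3_general {m : ℕ} (u : E3 → EuclideanSpace ℝ (Fin m))
    (hu : ContDiff ℝ 1 u) (hiv : InnerVariation u (ball (0 : E3) 64)) :
    ∀ (x : E3) (r : ℝ), 0 < r → closedBall x r ⊆ ball (0 : E3) 64 →
      HasDerivAt (fun s : ℝ => Hphi u x s)
        ((2 / r) * Hphi u x r + 2 * Dphi u x r) r := by
  intro x r hr hball
  set N : E3 → ℝ := fun y => ‖u y‖ ^ 2
  have hscale : ∀ s, 0 < s → Hphi u x s = s ^ 2 * ∫ z, N (x + s • z) * heightKernel 0 1 z :=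
    fun s hs => by
      rw [integral_comp_add_smul_mul_heightKernel N x hs, Hphi_eq_integral_heightKernel,
        mul_inv_cancel_left₀ (pow_ne_zero 2 hs.ne')]
  have hderiv : ∫ z, fderiv ℝ N (x + r • z) z * heightKernel 0 1 z = 2 / r ^ 2 * Dphi u x r :=
    calc ∫ z, fderiv ℝ N (x + r • z) z * heightKernel 0 1 z
        = ∫ z, (fun y => r⁻¹ * fderiv ℝ N y (y - x)) (x + r • z) * heightKernel 0 1 z := by
          simp only [add_sub_cancel_left, map_smul, smul_eq_mul, inv_mul_cancel_left₀ hr.ne']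
      _ = (r ^ 2)⁻¹ * (r⁻¹ * (2 * r * Dphi u x r)) := by
          rw [integral_comp_add_smul_mul_heightKernel (fun y => r⁻¹ * fderiv ℝ N y (y - x)) x hr]
          have hiv' : ∫ y, fderiv ℝ N y (y - x) * heightKernel x r y = 2 * r * Dphi u x r :=
            integral_fderiv_normSq_mul_heightKernel hu hiv hr hball
          simp only [mul_assoc r⁻¹, integral_const_mul, hiv']
      _ = 2 / r ^ 2 * Dphi u x r := by field_simp
  have hH := (hasDerivAt_pow 2 r).mul (hasDerivAt_integral_comp_add_smul_mul (μ := volume)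
    (hu.norm_sq ℝ) (integrable_heightKernel 0 one_pos) (hasCompactSupport_heightKernel 0 one_pos) x r)
  refine (hH.congr_of_eventuallyEq ((eventually_gt_nhds hr).mono hscale)).congr_deriv ?_
  rw [hscale r hr, hderiv]
  field_simp
  ring

/-- radial derivative of the smoothed height. -/
theorem stmt_3 {m : ℕ} (hm : 1 ≤ m) (u : E3 → EuclideanSpace ℝ (Fin m))
    (hu : ContDiff ℝ 1 u) (hiv : InnerVariation u (ball (0 : E3) 64)) :
    ∀ (x : E3) (r : ℝ), 0 < r → closedBall x r ⊆ ball (0 : E3) 64 →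
      HasDerivAt (fun s : ℝ => Hphi u x s)
        ((2 / r) * Hphi u x r + 2 * Dphi u x r) r :=
  stmt_3_general u hu hiv
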